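/- For any nonempty decision table T, there exists a table T* in the closure [T] of T under removal of columns and changing of decisions such that the minimum depth of a deterministic decision tree for T* satisfies h^d(T*) ≥ (log_k N(T))/Ŝ(T) − 2, where N(T) is the number of rows of T and Ŝ(T) = max{S(T') : T' ∈ [T]}. -/

import Mathlib

/- Decision tables over E_{k+2} = {0, ..., k+1}, following Ostonov & Moshkov,
"Deterministic and Strongly Nondeterministic Decision Trees for Decision Tables
from Closed Classes".  Columns are labeled with attributes (natural numbers),
rows are functions supported on the attribute set, decisions are Booleans. -/

namespace ClosedClasses

/-- A decision table with 0-1-decisions over `E_{k+2}`. Rows are pairwise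
different (they form a `Finset`) and vanish outside the attribute set. -/
structure Table (k : ℕ) where
  attrs : Finset ℕ
  rows : Finset (ℕ → Fin (k + 2))
  dec : (ℕ → Fin (k + 2)) → Bool
  supp : ∀ r ∈ rows, ∀ a ∉ attrs, r a = 0

namespace Table

variable {k : ℕ}

/-- Number of columns. -/
def W (T : Table k) : ℕ := T.attrs.card

/-- Number of rows. -/
def N (T : Table k) : ℕ := T.rows.card

/-- All rows carry the same decision. -/
def ConstDec (T : Table k) : Prop :=
  ∀ r ∈ T.rows, ∀ r' ∈ T.rows, T.dec r = T.dec r'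

/-- `D` separates the row `r` from all other rows of `T`. -/
def Separates (T : Table k) (D : Finset ℕ) (r : ℕ → Fin (k + 2)) : Prop :=
  D ⊆ T.attrs ∧ ∀ r' ∈ T.rows, r' ≠ r → ∃ a ∈ D, r a ≠ r' a

/-- `S(T, r)`: minimum cardinality of a separating set for row `r`. -/
noncomputable def Srow (T : Table k) (r : ℕ → Fin (k + 2)) : ℕ :=
  sInf {m | ∃ D : Finset ℕ, T.Separates D r ∧ D.card = m}

/-- `S(T)`: maximum over rows of `S(T, r)`. -/
noncomputable def S (T : Table k) : ℕ :=
  sSup {m | ∃ r ∈ T.rows, T.Srow r = m}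

/-- A test of `T`: a set of columns distinguishing rows with different decisions. -/
def IsTest (T : Table k) (D : Finset ℕ) : Prop :=
  D ⊆ T.attrs ∧
    ∀ r ∈ T.rows, ∀ r' ∈ T.rows, T.dec r ≠ T.dec r' → ∃ a ∈ D, r a ≠ r' a

/-- `Θ(T)`: minimum cardinality of a test of `T`. -/
noncomputable def theta (T : Table k) : ℕ :=
  sInf {m | ∃ D : Finset ℕ, T.IsTest D ∧ D.card = m}

end Table

/-- `(k+2)`-decision trees: leaves carry decisions, internal nodes query an
attribute and branch on its `k+2` possible values. -/
inductive DT (k : ℕ) where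
  | leaf : Bool → DT k
  | node : ℕ → (Fin (k + 2) → DT k) → DT k

namespace DT

variable {k : ℕ}

/-- Deterministic evaluation of a tree on a row. -/
def eval : DT k → (ℕ → Fin (k + 2)) → Bool
  | leaf b, _ => b
  | node a ch, r => eval (ch (r a)) r

/-- Depth: maximum number of queries along a complete path. -/
def depth : DT k → ℕ
  | leaf _ => 0
  | node _ ch => 1 + Finset.univ.sup fun i => (ch i).depth

/-- The set `P(Γ)` of attributes queried in the tree. -/
def attrSet : DT k → Finset ℕ
  | leaf _ => ∅
  | node a ch => insert a (Finset.univ.biUnion fun i => (ch i).attrSet)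

/-- `ψ`-cost: maximum over complete paths of `ψ` of the word of queried
attributes (the accumulator `w` holds attributes already queried). -/
def cost (ψ : List ℕ → ℕ) : DT k → List ℕ → ℕ
  | leaf _, w => ψ w
  | node a ch, w => Finset.univ.sup fun i => cost ψ (ch i) (a :: w)

end DT

/-- `Γ` is a deterministic decision tree for the table `T`. -/
def IsDT {k : ℕ} (T : Table k) (Γ : DT k) : Prop :=
  Γ.attrSet ⊆ T.attrs ∧ ∀ r ∈ T.rows, Γ.eval r = T.dec r

/-- `h^d(T)`: minimum depth of a deterministic decision tree for `T`. -/
noncomputable def hd {k : ℕ} (T : Table k) : ℕ :=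
  sInf {m | ∃ Γ : DT k, IsDT T Γ ∧ Γ.depth = m}

/-- `ψ^d(T)`: minimum `ψ`-complexity of a deterministic decision tree for `T`. -/
noncomputable def psid {k : ℕ} (ψ : List ℕ → ℕ) (T : Table k) : ℕ :=
  sInf {m | ∃ Γ : DT k, IsDT T Γ ∧ Γ.cost ψ [] = m}

/-- A row satisfies a rule (a conjunction of equations `attribute = value`). -/
def RuleSat {k : ℕ} (rule : List (ℕ × Fin (k + 2))) (r : ℕ → Fin (k + 2)) : Prop :=
  ∀ p ∈ rule, r p.1 = p.2

/-- A strongly nondeterministic decision tree for `T`, represented by the set of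
words of its complete paths (rules): every rule uses attributes of `T`, each
row with decision 1 satisfies some rule, and each rule is consistent only with
rows carrying decision 1. -/
def IsSNDT {k : ℕ} (T : Table k) (R : Finset (List (ℕ × Fin (k + 2)))) : Prop :=
  (∀ rule ∈ R, ∀ p ∈ rule, p.1 ∈ T.attrs) ∧
  (∀ r ∈ T.rows, T.dec r = true → ∃ rule ∈ R, RuleSat rule r) ∧
  (∀ rule ∈ R, ∀ r ∈ T.rows, RuleSat rule r → T.dec r = true)

/-- `ψ^s(T)`: minimum `ψ`-complexity of a strongly nondeterministic decision
tree for `T`. -/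
noncomputable def psis {k : ℕ} (ψ : List ℕ → ℕ) (T : Table k) : ℕ :=
  sInf {m | ∃ R, IsSNDT T R ∧ R.sup (fun rule => ψ (rule.map Prod.fst)) = m}

/-- `h^s(T)`: minimum depth of a strongly nondeterministic decision tree. -/
noncomputable def hs {k : ℕ} (T : Table k) : ℕ :=
  sInf {m | ∃ R, IsSNDT T R ∧ R.sup (fun rule => (rule.map Prod.fst).length) = m}

/-- A complexity measure on finite words over the alphabet `{f_i : i ∈ ω}`. -/
structure CMeasure where
  ψ : List ℕ → ℕ
  pos : ∀ w, ψ w = 0 ↔ w = []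
  perm : ∀ w w' : List ℕ, w.Perm w' → ψ w = ψ w'
  mono : ∀ w₁ w₂ : List ℕ, ψ w₁ ≤ ψ (w₁ ++ w₂)
  subadd : ∀ w₁ w₂ : List ℕ, ψ (w₁ ++ w₂) ≤ ψ w₁ + ψ w₂

/-- Bounded complexity measure: `ψ(α) ≥ |α|`. -/
def CMeasure.Bounded (ψ : CMeasure) : Prop := ∀ w : List ℕ, w.length ≤ ψ.ψ w

/-- Extension of a complexity measure to finite sets of attributes. -/
def CMeasure.setCost (ψ : CMeasure) (D : Finset ℕ) : ℕ := ψ.ψ (D.sort (· ≤ ·))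

namespace Table

variable {k : ℕ}

/-- `S_ψ(T, r)`: minimum `ψ`-complexity of a set separating `r` from the other rows. -/
noncomputable def Spsirow (ψ : CMeasure) (T : Table k) (r : ℕ → Fin (k + 2)) : ℕ :=
  sInf {m | ∃ D : Finset ℕ, T.Separates D r ∧ ψ.setCost D = m}

/-- `S_ψ(T)`: maximum over rows of `S_ψ(T, r)`. -/
noncomputable def Spsi (ψ : CMeasure) (T : Table k) : ℕ :=
  sSup {m | ∃ r ∈ T.rows, Spsirow ψ T r = m}

/-- `Θ_ψ(T)`: minimum `ψ`-complexity of a test of `T`. -/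
noncomputable def thetapsi (ψ : CMeasure) (T : Table k) : ℕ :=
  sInf {m | ∃ D : Finset ℕ, T.IsTest D ∧ ψ.setCost D = m}

/-- `W_ψ(T) = ψ(P(T))`. -/
def Wpsi (ψ : CMeasure) (T : Table k) : ℕ := ψ.setCost T.attrs

/-- `V_ψ(T) = max{ψ(f_i) : f_i ∈ P(T)}`. -/
noncomputable def Vpsi (ψ : CMeasure) (T : Table k) : ℕ :=
  sSup {m | ∃ a ∈ T.attrs, ψ.ψ [a] = m}

end Table

/-- Restriction of a row to a set of attributes. -/
def restrict {k : ℕ} (A : Finset ℕ) (r : ℕ → Fin (k + 2)) : ℕ → Fin (k + 2) :=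
  fun a => if a ∈ A then r a else 0

/-- `T'` belongs to the closure `[T]` of `T` under removal of columns and
changing of decisions: `T'` keeps a subset of the columns of `T`, its rows are
the restrictions of the rows of `T`, and its decisions are arbitrary. -/
def InClosure {k : ℕ} (T' T : Table k) : Prop :=
  T'.attrs ⊆ T.attrs ∧ (T'.rows : Set (ℕ → Fin (k + 2))) = restrict T'.attrs '' (T.rows : Set (ℕ → Fin (k + 2)))

/-- A nonempty class of decision tables closed under removal of columns and
changing of decisions. -/
def ClosedClass {k : ℕ} (A : Set (Table k)) : Prop :=
  A.Nonempty ∧ ∀ T ∈ A, ∀ T' : Table k, InClosure T' T → T' ∈ A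

/-- `Ŝ_ψ(T) = max{S_ψ(T') : T' ∈ [T]}`. -/
noncomputable def Shatpsi {k : ℕ} (ψ : CMeasure) (T : Table k) : ℕ :=
  sSup {m | ∃ T' : Table k, InClosure T' T ∧ T'.Spsi ψ = m}

/-- `Ŝ(T) = max{S(T') : T' ∈ [T]}`. -/
noncomputable def Shat {k : ℕ} (T : Table k) : ℕ :=
  sSup {m | ∃ T' : Table k, InClosure T' T ∧ T'.S = m}

/-- Fixing the attributes of the word `p` to the listed values restricts `T`
to a subtable (possibly empty) in which all rows carry the same decision. -/
def FixConst {k : ℕ} (T : Table k) (p : List (ℕ × Fin (k + 2))) : Prop :=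
  ∀ r ∈ T.rows, ∀ r' ∈ T.rows, RuleSat p r → RuleSat p r' → T.dec r = T.dec r'

/-- `M_ψ(T, δ)`: minimum `ψ`-value of a word of attributes of `T` whose
fixation to the values of `δ` yields a subtable with constant decisions. -/
noncomputable def Mpsirow {k : ℕ} (ψ : CMeasure) (T : Table k)
    (δ : ℕ → Fin (k + 2)) : ℕ :=
  sInf {m | ∃ p : List (ℕ × Fin (k + 2)),
    (∀ q ∈ p, q.1 ∈ T.attrs ∧ q.2 = δ q.1) ∧ FixConst T p ∧
      ψ.ψ (p.map Prod.fst) = m}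

/-- `M_ψ(T)`: maximum of `M_ψ(T, δ)` over all tuples `δ ∈ E_{k+2}^{W(T)}`. -/
noncomputable def Mpsi {k : ℕ} (ψ : CMeasure) (T : Table k) : ℕ :=
  sSup {m | ∃ δ : ℕ → Fin (k + 2), (∀ a ∉ T.attrs, δ a = 0) ∧ Mpsirow ψ T δ = m}

/-- A critical table: for every column there are two rows differing exactly
in this column. -/
def Critical {k : ℕ} (T : Table k) : Prop :=
  T.rows.Nonempty ∧ ∀ a ∈ T.attrs, ∃ r ∈ T.rows, ∃ r' ∈ T.rows,
    r a ≠ r' a ∧ ∀ b : ℕ, b ≠ a → r b = r' b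

/-- `H_D(n)`: the largest element of `D` not exceeding `n` (0 if none). -/
noncomputable def HD (D : Set ℕ) (n : ℕ) : ℕ := sSup (D ∩ Set.Iic n)

end ClosedClasses

open ClosedClasses

/-!
Restrict `T` to an inclusion-minimal set `D` of columns that still distinguishes its rows. The
resulting table `T⁰ ∈ [T]` has `N(T)` rows and is critical: every column `a ∈ D` is the only
difference between some two rows. Among all decision assignments, one splits at least half of
these `W(T⁰)` pairs (each pair is split by exactly half of the 2-colourings), and every tree for
`J(ν, T⁰)` must query the column of each split pair; as a tree of depth `h` queries fewer than
`(k+2)^h` columns, `W(T⁰) < 2 (k+2)^h` with `h = h^d(J(ν, T⁰))`. On the other hand a row of `T⁰`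
is determined by its values on at most `S(T⁰) ≤ Ŝ(T)` columns, whence
`N(T) ≤ (W(T⁰)(k+2) + 1)^{Ŝ(T)} ≤ (k+2)^{(h+2) Ŝ(T)}`, and taking logarithms gives the bound.
-/

section Colorings

open Finset

variable {ι β : Type*} [Fintype β] [DecidableEq β]

/-- Flipping the colour of `x` exchanges the colourings that separate `x` and `y` with those that
do not. -/
lemma two_mul_card_filter_ne {x y : β} (hxy : x ≠ y) :
    2 * #{ρ : β → Bool | ρ x ≠ ρ y} = Fintype.card (β → Bool) := by
  let flip : (β → Bool) → β → Bool := fun ρ => Function.update ρ x (!ρ x)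
  have hflip : ∀ ρ, flip (flip ρ) = ρ := fun ρ => by simp [flip]
  have hswap : #{ρ : β → Bool | ρ x ≠ ρ y} = #{ρ : β → Bool | ¬ρ x ≠ ρ y} :=
    card_nbij' flip flip
      (fun ρ hρ => by simpa [flip, Function.update_of_ne hxy.symm, Bool.eq_not] using hρ)
      (fun ρ hρ => by simpa [flip, Function.update_of_ne hxy.symm] using hρ)
      (fun ρ _ => hflip ρ) (fun ρ _ => hflip ρ)
  have hsplit := card_filter_add_card_filter_not (s := univ) fun ρ : β → Bool => ρ x ≠ ρ y
  rw [card_univ] at hsplit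
  omega

lemma exists_coloring_card_le_two_mul [Fintype ι] {u v : ι → β} (huv : ∀ i, u i ≠ v i) :
    ∃ ρ : β → Bool, Fintype.card ι ≤ 2 * #{i | ρ (u i) ≠ ρ (v i)} := by
  have hsum : ∑ ρ : β → Bool, 2 * #{i | ρ (u i) ≠ ρ (v i)} =
      ∑ _ρ : β → Bool, Fintype.card ι := by
    simp_rw [card_filter, mul_sum]
    rw [sum_comm]
    simp_rw [← mul_sum, ← card_filter, mul_sum, two_mul_card_filter_ne (huv _)]
    simp [mul_comm]
  obtain ⟨ρ, -, hρ⟩ := exists_le_of_sum_le univ_nonempty hsum.ge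
  exact ⟨ρ, hρ⟩

end Colorings

lemma Real.logb_div_sub_two_le {b : ℝ} (hb : 1 < b) {n h s : ℕ}
    (hn : (n : ℝ) ≤ b ^ ((h + 2) * s)) : Real.logb b n / s - 2 ≤ h := by
  have hlog : Real.logb b n ≤ (h + 2) * s := by
    rcases n.eq_zero_or_pos with rfl | hpos
    · rw [Nat.cast_zero, Real.logb_zero]
      positivity
    · calc Real.logb b n ≤ Real.logb b (b ^ ((h + 2) * s)) :=
            Real.logb_le_logb_of_le hb (by exact_mod_cast hpos) hn
        _ = (h + 2) * s := by simp [Real.logb_pow, Real.logb_self_eq_one hb]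
  have := div_le_of_le_mul₀ (Nat.cast_nonneg s) (by positivity) hlog
  linarith

lemma Nat.mul_add_one_le_pow_add_two {w q h : ℕ} (hq : 2 ≤ q) (hw : w < 2 * q ^ h) :
    w * q + 1 ≤ q ^ (h + 2) := by
  have hw' : (w + 1) * q ≤ 2 * q ^ h * q := Nat.mul_le_mul_right q hw
  have hq' : 2 * (q ^ h * q) ≤ q * (q ^ h * q) := Nat.mul_le_mul_right _ hq
  rw [pow_add, sq]
  linarith

namespace ClosedClasses

open Finset

variable {k : ℕ}

lemma restrict_erase_of_ne {D : Finset ℕ} {a b : ℕ} (hb : b ≠ a) (r : ℕ → Fin (k + 2)) :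
    restrict (D.erase a) r b = restrict D r b := by
  simp [restrict, hb]

namespace Table

lemma restrict_attrs_of_mem_rows (T : Table k) {r : ℕ → Fin (k + 2)} (hr : r ∈ T.rows) :
    restrict T.attrs r = r := by
  funext a
  by_cases ha : a ∈ T.attrs <;> simp [restrict, ha, T.supp r hr]

/-- The paper's `J(ν, T)`. -/
def withDec (T : Table k) (ν : (ℕ → Fin (k + 2)) → Bool) : Table k :=
  { T with dec := ν }

lemma inClosure_withDec {T' T : Table k} (ν : (ℕ → Fin (k + 2)) → Bool)
    (h : InClosure T' T) : InClosure (T'.withDec ν) T :=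
  h

section restrictTo

open Classical

/-- Decisions are immaterial here: they are reassigned by `withDec` afterwards. -/
noncomputable def restrictTo (T : Table k) (D : Finset ℕ) : Table k where
  attrs := D
  rows := T.rows.image (restrict D)
  dec := T.dec
  supp := by
    simp only [mem_image]
    rintro _ ⟨r, -, rfl⟩ a ha
    simp [restrict, ha]

lemma inClosure_restrictTo (T : Table k) {D : Finset ℕ} (hD : D ⊆ T.attrs) :
    InClosure (T.restrictTo D) T :=
  ⟨hD, coe_image⟩

lemma N_restrictTo (T : Table k) {D : Finset ℕ}
    (hD : Set.InjOn (restrict D) (T.rows : Set (ℕ → Fin (k + 2)))) :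
    (T.restrictTo D).N = T.N :=
  card_image_of_injOn hD

end restrictTo

end Table

namespace DT

def ofList : List ℕ → ((ℕ → Fin (k + 2)) → Bool) → DT k
  | [], g => leaf (g 0)
  | a :: l, g => node a fun i => ofList l fun r => g (Function.update r a i)

lemma eval_ofList (l : List ℕ) (g : (ℕ → Fin (k + 2)) → Bool) (r : ℕ → Fin (k + 2)) :
    (ofList l g).eval r = g (restrict l.toFinset r) := by
  induction l generalizing g with
  | nil => simp only [ofList, eval]; congr 1
  | cons a l ih =>
    simp only [ofList, eval, ih]
    congr 1
    funext b
    by_cases hb : b = a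
    · subst hb; simp [restrict]
    · simp [restrict, hb]

lemma attrSet_ofList_subset (l : List ℕ) (g : (ℕ → Fin (k + 2)) → Bool) :
    (ofList l g).attrSet ⊆ l.toFinset := by
  induction l generalizing g with
  | nil => simp [ofList, attrSet]
  | cons a l ih =>
    simp only [ofList, attrSet, List.toFinset_cons]
    exact insert_subset_insert a (biUnion_subset.mpr fun i _ => ih _)

lemma card_attrSet_lt_pow_depth (Γ : DT k) : #Γ.attrSet < (k + 2) ^ Γ.depth := by
  induction Γ with
  | leaf b => simp [attrSet, depth]
  | node a ch ih =>
    simp only [attrSet, depth, pow_add, pow_one]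
    set d := univ.sup fun i => (ch i).depth
    have hchild : ∀ i, #(ch i).attrSet + 1 ≤ (k + 2) ^ d := fun i =>
      (ih i).trans_le (Nat.pow_le_pow_right (by omega) (le_sup (f := fun i => (ch i).depth)
        (mem_univ i)))
    have hsum : ∑ i, (#(ch i).attrSet + 1) ≤ (k + 2) * (k + 2) ^ d := by
      simpa using sum_le_sum fun i (_ : i ∈ univ) => hchild i
    have hcard : #(insert a (univ.biUnion fun i => (ch i).attrSet)) ≤ ∑ i, #(ch i).attrSet + 1 :=
      (card_insert_le _ _).trans (Nat.add_le_add_right card_biUnion_le 1)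
    rw [sum_add_distrib, sum_const, card_univ, Fintype.card_fin, smul_eq_mul, mul_one] at hsum
    omega

lemma mem_attrSet_of_eval_ne (Γ : DT k) {u v : ℕ → Fin (k + 2)} {a : ℕ}
    (hne : Γ.eval u ≠ Γ.eval v) (hagree : ∀ b, b ≠ a → u b = v b) : a ∈ Γ.attrSet := by
  induction Γ with
  | leaf b => exact absurd rfl hne
  | node c ch ih =>
    by_cases hca : c = a
    · subst hca
      exact mem_insert_self _ _
    · have huv := hagree c hca
      simp only [eval, huv] at hne
      exact mem_insert_of_mem (mem_biUnion.mpr ⟨v c, mem_univ _, ih _ hne⟩)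

end DT

lemma exists_isDT (T : Table k) : ∃ Γ, IsDT T Γ := by
  refine ⟨DT.ofList T.attrs.toList T.dec, ?_, fun r hr => ?_⟩
  · simpa using DT.attrSet_ofList_subset T.attrs.toList T.dec
  · rw [DT.eval_ofList, toList_toFinset, T.restrict_attrs_of_mem_rows hr]

lemma exists_isDT_depth_eq_hd (T : Table k) : ∃ Γ, IsDT T Γ ∧ Γ.depth = hd T := by
  obtain ⟨Γ, hΓ⟩ := exists_isDT T
  exact Nat.sInf_mem (s := {m | ∃ Γ : DT k, IsDT T Γ ∧ Γ.depth = m}) ⟨_, Γ, hΓ, rfl⟩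

namespace Table

/-- A tree for `J(ν, T)` must query every column `a` whose two witnessing rows get different
decisions under `ν`, and a suitable `ν` splits at least half of these pairs. -/
theorem exists_W_lt_two_mul_pow_hd_withDec (T : Table k)
    (hT : ∀ a ∈ T.attrs, ∃ r ∈ T.rows, ∃ r' ∈ T.rows, r a ≠ r' a ∧ ∀ b, b ≠ a → r b = r' b) :
    ∃ ν, T.W < 2 * (k + 2) ^ hd (T.withDec ν) := by
  choose u hu v hv huv hagree using hT
  obtain ⟨ρ, hρ⟩ := exists_coloring_card_le_two_mul
    (u := fun a : T.attrs => fun b : T.attrs => u a a.2 b)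
    (v := fun a : T.attrs => fun b : T.attrs => v a a.2 b)
    fun a h => huv a a.2 (congrFun h a)
  let ν : (ℕ → Fin (k + 2)) → Bool := fun r => ρ fun b : T.attrs => r b
  obtain ⟨Γ, ⟨-, hΓ⟩, hdepth⟩ := exists_isDT_depth_eq_hd (T.withDec ν)
  have hcut : #{a : T.attrs | (ρ fun b : T.attrs => u a a.2 b) ≠ ρ fun b : T.attrs => v a a.2 b}
      ≤ #Γ.attrSet :=
    card_le_card_of_injOn Subtype.val
      (fun a ha => Γ.mem_attrSet_of_eval_ne
        (by rw [hΓ _ (hu a a.2), hΓ _ (hv a a.2)]; exact (mem_filter.mp (mem_coe.mp ha)).2)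
        (hagree a a.2))
      Subtype.val_injective.injOn
  have hΓcard := Γ.card_attrSet_lt_pow_depth
  refine ⟨ν, ?_⟩
  rw [W, ← hdepth, ← Fintype.card_coe]
  omega

/-- Take `D` inclusion-minimal: dropping any `a ∈ D` merges two rows, which after restriction to
`D` therefore differ exactly in the column `a`. -/
theorem exists_restrictTo_critical (T : Table k) :
    ∃ D ⊆ T.attrs, Set.InjOn (restrict D) (T.rows : Set (ℕ → Fin (k + 2))) ∧
      ∀ a ∈ D, ∃ r ∈ (T.restrictTo D).rows, ∃ r' ∈ (T.restrictTo D).rows,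
        r a ≠ r' a ∧ ∀ b, b ≠ a → r b = r' b := by
  classical
  have hattrs : Set.InjOn (restrict T.attrs) (T.rows : Set (ℕ → Fin (k + 2))) :=
    fun r hr r' hr' h => by
      rwa [T.restrict_attrs_of_mem_rows hr, T.restrict_attrs_of_mem_rows hr'] at h
  obtain ⟨D, hDsub, hDmin⟩ := exists_minimal_le_of_wellFoundedLT
    (fun D : Finset ℕ => Set.InjOn (restrict D) (T.rows : Set (ℕ → Fin (k + 2)))) T.attrs hattrs
  refine ⟨D, hDsub, hDmin.prop, fun a ha => ?_⟩
  obtain ⟨r, hr, r', hr', heq, hne⟩ : ∃ r ∈ T.rows, ∃ r' ∈ T.rows,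
      restrict (D.erase a) r = restrict (D.erase a) r' ∧ r ≠ r' := by
    simpa [Set.InjOn] using hDmin.not_prop_of_lt (erase_ssubset ha)
  have hoff : ∀ b, b ≠ a → restrict D r b = restrict D r' b := fun b hb => by
    rw [← restrict_erase_of_ne (D := D) hb r, ← restrict_erase_of_ne (D := D) hb r', heq]
  refine ⟨restrict D r, mem_image_of_mem _ hr, restrict D r', mem_image_of_mem _ hr', ?_, hoff⟩
  intro hat
  refine hne (hDmin.prop hr hr' (funext fun b => ?_))
  by_cases hb : b = a
  · rwa [hb]
  · exact hoff b hb

lemma separates_attrs (T : Table k) {r : ℕ → Fin (k + 2)} (hr : r ∈ T.rows) :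
    T.Separates T.attrs r := by
  refine ⟨subset_rfl, fun r' hr' hne => ?_⟩
  by_contra! hall
  refine hne ?_
  rw [← T.restrict_attrs_of_mem_rows hr, ← T.restrict_attrs_of_mem_rows hr']
  funext a
  by_cases ha : a ∈ T.attrs <;> simp [restrict, ha, hall]

lemma Srow_le_W (T : Table k) {r : ℕ → Fin (k + 2)} (hr : r ∈ T.rows) : T.Srow r ≤ T.W :=
  Nat.sInf_le ⟨T.attrs, T.separates_attrs hr, rfl⟩

lemma S_le_W (T : Table k) : T.S ≤ T.W :=
  csSup_le' fun _ ⟨_, hr, h⟩ => h ▸ T.Srow_le_W hr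

lemma exists_separates_card_le_S (T : Table k) {r : ℕ → Fin (k + 2)} (hr : r ∈ T.rows) :
    ∃ E, T.Separates E r ∧ #E ≤ T.S := by
  obtain ⟨E, hE, hEcard⟩ := Nat.sInf_mem
    (s := {m | ∃ D : Finset ℕ, T.Separates D r ∧ D.card = m}) ⟨_, _, T.separates_attrs hr, rfl⟩
  refine ⟨E, hE, ?_⟩
  rw [hEcard]
  exact le_csSup ⟨T.W, fun _ ⟨_, hr', h⟩ => h ▸ T.Srow_le_W hr'⟩ ⟨r, hr, rfl⟩

/-- A row is determined by the list of pairs `(a, r a)` over a separating set of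
at most `S(T)` columns, padded to length `S(T)` by `none`. -/
theorem N_le_pow_S (T : Table k) : T.N ≤ (T.W * (k + 2) + 1) ^ T.S := by
  classical
  choose! E hE hEcard using fun r (hr : r ∈ T.rows) => T.exists_separates_card_le_S hr
  let pairs : (ℕ → Fin (k + 2)) → List (ℕ × Fin (k + 2)) := fun r =>
    ((E r).sort (· ≤ ·)).map fun a => (a, r a)
  let code : (ℕ → Fin (k + 2)) → Fin T.S → Option (ℕ × Fin (k + 2)) := fun r i => (pairs r)[i]?
  let X : Finset (Option (ℕ × Fin (k + 2))) := insert none ((T.attrs ×ˢ univ).map .some)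
  have hpairs_mem : ∀ r, ∀ p ∈ pairs r, p.2 = r p.1 ∧ p.1 ∈ E r := by
    simp [pairs]
  have hpairs_len : ∀ r ∈ T.rows, (pairs r).length ≤ T.S := fun r hr => by
    simpa [pairs] using hEcard r hr
  have hmaps : ∀ r ∈ T.rows, code r ∈ Fintype.piFinset fun _ => X := by
    refine fun r hr => Fintype.mem_piFinset.mpr fun i => ?_
    rcases h : (pairs r)[(i : ℕ)]? with _ | p
    · simp [code, h, X]
    · obtain ⟨-, hp1⟩ := hpairs_mem r p (List.mem_of_getElem? h)
      simp [code, h, X, (hE r hr).1 hp1]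
  have hinj : Set.InjOn code (T.rows : Set (ℕ → Fin (k + 2))) := by
    intro r hr r' hr' hcode
    have hlist : pairs r = pairs r' := List.ext_getElem? fun n => by
      by_cases hn : n < T.S
      · exact congrFun hcode ⟨n, hn⟩
      · rw [List.getElem?_eq_none (by linarith [hpairs_len r hr]),
          List.getElem?_eq_none (by linarith [hpairs_len r' hr'])]
    by_contra hne
    obtain ⟨a, ha, hra⟩ := (hE r hr).2 r' hr' (Ne.symm hne)
    have : (a, r a) ∈ pairs r' := hlist ▸ by simpa [pairs] using ha
    exact hra (hpairs_mem r' _ this).1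
  have hX : #X = T.W * (k + 2) + 1 := by
    simp [X, W]
  calc T.N ≤ #(Fintype.piFinset fun _ : Fin T.S => X) := card_le_card_of_injOn code hmaps hinj
    _ = (T.W * (k + 2) + 1) ^ T.S := by simp [hX]

end Table

lemma S_le_Shat {T' T : Table k} (h : InClosure T' T) : T'.S ≤ Shat T :=
  le_csSup ⟨T.W, fun _ ⟨T'', h'', hS⟩ => hS ▸ T''.S_le_W.trans (card_le_card h''.1)⟩ ⟨T', h, rfl⟩

end ClosedClasses

theorem exists_closure_table_lemma14_general (k : ℕ) (T : Table k) :
    ∃ T' : Table k, InClosure T' T ∧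
      Real.logb (k + 2) (T.N : ℝ) / (Shat T : ℝ) - 2 ≤ (hd T' : ℝ) := by
  obtain ⟨D, hD, hinj, hcrit⟩ := T.exists_restrictTo_critical
  obtain ⟨ν, hν⟩ := (T.restrictTo D).exists_W_lt_two_mul_pow_hd_withDec hcrit
  set T' := (T.restrictTo D).withDec ν
  have hT' : InClosure T' T := Table.inClosure_withDec ν (T.inClosure_restrictTo hD)
  have hcount : T.N ≤ (k + 2) ^ ((hd T' + 2) * Shat T) :=
    calc T.N = T'.N := (T.N_restrictTo hinj).symm
      _ ≤ (T'.W * (k + 2) + 1) ^ T'.S := T'.N_le_pow_S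
      _ ≤ ((k + 2) ^ (hd T' + 2)) ^ T'.S :=
        Nat.pow_le_pow_left (Nat.mul_add_one_le_pow_add_two (by omega) hν) _
      _ ≤ ((k + 2) ^ (hd T' + 2)) ^ Shat T :=
        Nat.pow_le_pow_right (by positivity) (S_le_Shat hT')
      _ = (k + 2) ^ ((hd T' + 2) * Shat T) := (pow_mul ..).symm
  exact ⟨T', hT', Real.logb_div_sub_two_le (by linarith) (by exact_mod_cast hcount)⟩

/-- Lemma 14: for any nonempty table `T` there exists
`T* ∈ [T]` with `h^d(T*) ≥ log_k N(T) / Ŝ(T) − 2`. -/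
theorem exists_closure_table_lemma14 (k : ℕ) (T : Table k)
    (h : T.rows.Nonempty) :
    ∃ T' : Table k, InClosure T' T ∧
      Real.logb (k + 2) (T.N : ℝ) / (Shat T : ℝ) - 2 ≤ (hd T' : ℝ) :=
  exists_closure_table_lemma14_general k T
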